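/- In the Yokonuma–Hecke algebra Y, Juyumaya's generators satisfy the quadratic relation L_i² = 1 − Q^{-1}(E_i − L_iE_i) for every i. -/

import Mathlib

noncomputable section

/-- The product-of-coordinates homomorphism `(Fin m → Fˣ) →* Fˣ`. -/
def prodHom (m : ℕ) (F : Type*) [Field F] : (Fin m → Fˣ) →* Fˣ :=
  MonoidHom.mk' (fun f => ∏ i, f i) (by
    intro a b
    simp [Finset.prod_mul_distrib])

/-- The diagonal torus `T` of `SL_{n+1}(F)`: tuples in `Fˣ` with product `1`,
as a subgroup of `Fin (n+1) → Fˣ`. -/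
def TGrp (n : ℕ) (F : Type*) [Field F] : Subgroup (Fin (n + 1) → Fˣ) :=
  (prodHom (n + 1) F).ker

/-- The action of the adjacent transposition `s_i` on the diagonal torus, exchanging
the `i`-th and `(i+1)`-st diagonal entries. -/
def sAct {n : ℕ} {F : Type*} [Field F] (i : Fin n) (t : TGrp n F) : TGrp n F :=
  ⟨fun j => t.1 (Equiv.swap i.castSucc i.succ j), by
    have h : ∏ j, t.1 j = 1 := t.2
    have := Equiv.prod_comp (Equiv.swap i.castSucc i.succ) t.1
    simp only [TGrp, MonoidHom.mem_ker, prodHom, MonoidHom.mk'_apply]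
    rw [this, h]⟩

/-- `h_i(r)`: the diagonal matrix with `r` in position `i`, `r⁻¹` in position `i+1`,
and `1` elsewhere. -/
def hElem {n : ℕ} {F : Type*} [Field F] [DecidableEq F] (i : Fin n) (r : Fˣ) :
    TGrp n F :=
  ⟨Pi.mulSingle i.castSucc r * Pi.mulSingle i.succ r⁻¹, by
    simp only [TGrp, MonoidHom.mem_ker, prodHom, MonoidHom.mk'_apply, Pi.mul_apply,
      Finset.prod_mul_distrib]
    rw [Finset.prod_pi_mulSingle', Finset.prod_pi_mulSingle']
    simp⟩

/-- The generator `R_i` in the free algebra, for `i` a simple reflection. -/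
def yR (n : ℕ) (F : Type*) [Field F] (i : Fin n) :
    FreeAlgebra ℂ (Fin n ⊕ ↥(TGrp n F)) :=
  FreeAlgebra.ι ℂ (Sum.inl i)

/-- The generator `R_t` in the free algebra, for `t` in the diagonal torus. -/
def yT (n : ℕ) (F : Type*) [Field F] (t : TGrp n F) :
    FreeAlgebra ℂ (Fin n ⊕ ↥(TGrp n F)) :=
  FreeAlgebra.ι ℂ (Sum.inr t)

/-- Defining relations of the Yokonuma–Hecke algebra, with `Q = |F|`,
`H_i(r) = R_{h_i(r)}` and `E_i = Σ_{r ∈ F^×} H_i(r)`. -/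
inductive YRel (n : ℕ) (F : Type*) [Field F] [Fintype F] [DecidableEq F] :
    FreeAlgebra ℂ (Fin n ⊕ ↥(TGrp n F)) → FreeAlgebra ℂ (Fin n ⊕ ↥(TGrp n F)) → Prop
  | comm (i j : Fin n) (h : 2 ≤ Nat.dist i j) :
      YRel n F (yR n F i * yR n F j) (yR n F j * yR n F i)
  | braid (i j : Fin n) (h : Nat.dist i j = 1) :
      YRel n F (yR n F i * yR n F j * yR n F i) (yR n F j * yR n F i * yR n F j)
  | t_comm (t : TGrp n F) (i : Fin n) :
      YRel n F (yT n F t * yR n F i) (yR n F i * yT n F (sAct i t))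
  | t_mul (t t' : TGrp n F) :
      YRel n F (yT n F t * yT n F t') (yT n F (t * t'))
  | t_one : YRel n F (yT n F 1) 1
  | quad (i : Fin n) :
      YRel n F (yR n F i * yR n F i)
        ((Fintype.card F : ℂ) • yT n F (hElem i (-1)) +
          yR n F i * ∑ r : Fˣ, yT n F (hElem i r))

/-- The Yokonuma–Hecke algebra `Y`. -/
abbrev Yok (n : ℕ) (F : Type*) [Field F] [Fintype F] [DecidableEq F] :=
  RingQuot (YRel n F)

/-- The standard generator `R_i` of `Y`. -/
noncomputable def yokR (n : ℕ) (F : Type*) [Field F] [Fintype F] [DecidableEq F]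
    (i : Fin n) : Yok n F :=
  RingQuot.mkAlgHom ℂ (YRel n F) (yR n F i)

/-- The standard generator `R_t` of `Y`. -/
noncomputable def yokT (n : ℕ) (F : Type*) [Field F] [Fintype F] [DecidableEq F]
    (t : TGrp n F) : Yok n F :=
  RingQuot.mkAlgHom ℂ (YRel n F) (yT n F t)

/-- `E_i = Σ_{r ∈ F^×} H_i(r) ∈ Y`, where `H_i(r) = R_{h_i(r)}`. -/
noncomputable def yokE (n : ℕ) (F : Type*) [Field F] [Fintype F] [DecidableEq F]
    (i : Fin n) : Yok n F :=
  ∑ r : Fˣ, yokT n F (hElem i r)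

/-- Juyumaya's generator `L_i = Q⁻¹(E_i + R_i Ψ_i)`, where
`Ψ_i = Σ_{r ∈ F^×} ψ(r) H_i(r)`. -/
noncomputable def yokL (n : ℕ) (F : Type*) [Field F] [Fintype F] [DecidableEq F]
    (ψ : F → ℂ) (i : Fin n) : Yok n F :=
  (Fintype.card F : ℂ)⁻¹ •
    (yokE n F i + yokR n F i * ∑ r : Fˣ, ψ (r : F) • yokT n F (hElem i r))

/-!
Write `E = Σ_r H(r)` and `Ψ = Σ_r ψ(r) H(r)`, so that `Q L = E + RΨ`. Since `r ↦ H(r)` is a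
homomorphism, `E` absorbs every `H(r)`, and `ΨE = EΨ = (Σ_r ψ(r)) E = -E`. Moving `R` across
`Ψ` turns it into `Ψ' = Σ_r ψ(r⁻¹) H(r)`, and `Ψ'Ψ = Q H(-1) - E` because the coefficient of
`H(u)` in it is `Σ_r ψ(r⁻¹(1 + u))`, which is `Q - 1` if `u = -1` and `-1` otherwise. With the
quadratic relation for `R` this gives `(RΨ)² = Q² - QE + RE`, and expanding `(E + RΨ)²` proves
the relation.
-/

lemma Fintype.sum_eq_add_sum_units {G₀ M : Type*} [GroupWithZero G₀] [Fintype G₀]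
    [DecidableEq G₀] [AddCommMonoid M] (f : G₀ → M) :
    ∑ x, f x = f 0 + ∑ u : G₀ˣ, f u := by
  rw [← Finset.add_sum_erase _ _ (Finset.mem_univ 0)]
  congr 1
  exact (Finset.sum_subtype _ (by simp) _).trans
    (Fintype.sum_equiv unitsEquivNeZero.symm _ _ fun _ => rfl)

lemma AddChar.sum_units_mul {F K : Type*} [Field F] [Fintype F] [DecidableEq F] [CommRing K]
    [IsDomain K] {ψ : AddChar F K} (hψ : ψ.IsPrimitive) (b : F) :
    ∑ u : Fˣ, ψ (u * b) = if b = 0 then (Fintype.card F : K) - 1 else -1 := by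
  have h := AddChar.sum_mulShift b hψ
  rw [Fintype.sum_eq_add_sum_units, zero_mul, AddChar.map_zero_eq_one] at h
  split_ifs at h ⊢ <;> linear_combination h

namespace MonoidHom

variable {G k A : Type*} [Group G] [Fintype G] [CommSemiring k] [Semiring A] [Algebra k A]
  (H : G →* A)

lemma mul_sum_apply (g : G) : H g * ∑ x, H x = ∑ x, H x := by
  simp_rw [Finset.mul_sum, ← map_mul]
  exact Fintype.sum_equiv (Equiv.mulLeft g) _ _ fun _ => rfl

lemma sum_apply_mul (g : G) : (∑ x, H x) * H g = ∑ x, H x := by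
  simp_rw [Finset.sum_mul, ← map_mul]
  exact Fintype.sum_equiv (Equiv.mulRight g) _ _ fun _ => rfl

lemma sum_mul_sum : (∑ x, H x) * ∑ x, H x = Fintype.card G • ∑ x, H x := by
  simp_rw [Finset.sum_mul, mul_sum_apply, Finset.sum_const, Finset.card_univ]

lemma sum_smul_mul_sum (f : G → k) :
    (∑ x, f x • H x) * ∑ y, H y = (∑ x, f x) • ∑ y, H y := by
  simp_rw [Finset.sum_mul, smul_mul_assoc, mul_sum_apply, Finset.sum_smul]

lemma sum_mul_sum_smul (f : G → k) :
    (∑ y, H y) * ∑ x, f x • H x = (∑ x, f x) • ∑ y, H y := by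
  simp_rw [Finset.mul_sum, mul_smul_comm, sum_apply_mul, Finset.sum_smul]

lemma sum_smul_mul_sum_smul (f g : G → k) :
    (∑ x, f x • H x) * ∑ y, g y • H y = ∑ z, (∑ x, f x * g (x⁻¹ * z)) • H z := by
  have reindex : ∀ x, ∑ y, (f x * g y) • H (x * y) = ∑ z, (f x * g (x⁻¹ * z)) • H z :=
    fun x => Fintype.sum_equiv (Equiv.mulLeft x) _ _ fun y => by simp
  simp_rw [Finset.sum_mul, Finset.mul_sum, smul_mul_smul_comm, ← map_mul, reindex]
  rw [Finset.sum_comm]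
  simp_rw [Finset.sum_smul]

variable {R : A} (hR : ∀ g, H g * R = R * H g⁻¹)
include hR

lemma sum_mul_of_mul_eq_mul_inv : (∑ x, H x) * R = R * ∑ x, H x := by
  simp_rw [Finset.sum_mul, Finset.mul_sum, hR]
  exact Fintype.sum_equiv (Equiv.inv G) _ _ fun _ => rfl

lemma sum_smul_mul_of_mul_eq_mul_inv (f : G → k) :
    (∑ x, f x • H x) * R = R * ∑ x, f x⁻¹ • H x := by
  simp_rw [Finset.sum_mul, Finset.mul_sum, smul_mul_assoc, hR, mul_smul_comm]
  exact Fintype.sum_equiv (Equiv.inv G) _ _ fun _ => by simp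

end MonoidHom

section JuyumayaRelation

variable {K F A : Type*} [Field K] [Field F] [Fintype F] [DecidableEq F] [Ring A] [Algebra K A]
  (H : Fˣ →* A)

lemma sum_mul_sum_units :
    (∑ x : Fˣ, H x) * ∑ x, H x = ((Fintype.card F : K) - 1) • ∑ x, H x := by
  rw [MonoidHom.sum_mul_sum, ← Nat.cast_smul_eq_nsmul K, Fintype.card_units,
    Nat.cast_sub Fintype.card_pos, Nat.cast_one]

variable {ψ : AddChar F K} (hψ : ψ.IsPrimitive)
include hψ

lemma AddChar.sum_units_eq_neg_one : ∑ u : Fˣ, ψ u = -1 := by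
  simpa using AddChar.sum_units_mul hψ 1

lemma sum_inv_smul_mul_sum_smul :
    (∑ x : Fˣ, ψ ↑x⁻¹ • H x) * ∑ x : Fˣ, ψ x • H x =
      (Fintype.card F : K) • H (-1) - ∑ x, H x := by
  have coeff : ∀ z : Fˣ, ∑ x : Fˣ, ψ ↑x⁻¹ * ψ ↑(x⁻¹ * z) =
      (if z = -1 then (Fintype.card F : K) else 0) - 1 := by
    intro z
    have h : ∀ x : Fˣ, ψ ↑x⁻¹ * ψ ↑(x⁻¹ * z) = ψ (↑x⁻¹ * (1 + z)) := fun x => by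
      rw [← AddChar.map_add_eq_mul, Units.val_mul, mul_add, mul_one]
    simp_rw [h]
    rw [Fintype.sum_equiv (Equiv.inv Fˣ) (fun x : Fˣ => ψ (↑x⁻¹ * (1 + z)))
      (fun x : Fˣ => ψ (x * (1 + z))) fun _ => rfl, AddChar.sum_units_mul hψ]
    have hz : (1 + (z : F) = 0) ↔ z = -1 := by
      rw [add_eq_zero_iff_neg_eq', ← Units.val_neg, Units.val_eq_one, neg_eq_iff_eq_neg,
        eq_comm]
    by_cases h : z = -1 <;> simp [hz, h]
  simp_rw [MonoidHom.sum_smul_mul_sum_smul, coeff, sub_smul, one_smul, ite_smul, zero_smul,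
    Finset.sum_sub_distrib, Finset.sum_ite_eq', Finset.mem_univ, if_true]

lemma add_mul_twist_mul_sum (R : A) :
    (∑ x, H x + R * ∑ x : Fˣ, ψ x • H x) * ∑ x, H x =
      ((Fintype.card F : K) - 1) • ∑ x, H x - R * ∑ x, H x := by
  rw [add_mul, sum_mul_sum_units (K := K) H, mul_assoc,
    MonoidHom.sum_smul_mul_sum H (fun x : Fˣ => ψ x), AddChar.sum_units_eq_neg_one hψ,
    neg_one_smul, mul_neg, ← sub_eq_add_neg]

variable {R : A} (hconj : ∀ r, H r * R = R * H r⁻¹)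
  (hquad : R * R = (Fintype.card F : K) • H (-1) + R * ∑ r, H r)
include hconj hquad

lemma mul_twist_mul_self :
    (R * ∑ x : Fˣ, ψ x • H x) * (R * ∑ x : Fˣ, ψ x • H x) =
      ((Fintype.card F : K) * Fintype.card F) • 1 - (Fintype.card F : K) • ∑ x, H x +
        R * ∑ x, H x := by
  set Q : K := (Fintype.card F : K)
  set E := ∑ x, H x
  have hsq : H (-1) * H (-1) = 1 := by rw [← map_mul, neg_one_mul, neg_neg, map_one]
  calc (R * ∑ x : Fˣ, ψ x • H x) * (R * ∑ x : Fˣ, ψ x • H x)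
      = R * R * ((∑ x : Fˣ, ψ ↑x⁻¹ • H x) * ∑ x : Fˣ, ψ x • H x) := by
        rw [mul_assoc, ← mul_assoc _ R, MonoidHom.sum_smul_mul_of_mul_eq_mul_inv H hconj,
          mul_assoc, mul_assoc]
    _ = (Q • H (-1) + R * E) * (Q • H (-1) - E) := by
        rw [hquad, sum_inv_smul_mul_sum_smul H hψ]
    _ = (Q * Q) • 1 - Q • E + R * E := by
        rw [mul_sub, add_mul, add_mul, smul_mul_smul_comm, hsq, smul_mul_assoc,
          MonoidHom.mul_sum_apply, mul_smul_comm, mul_assoc, MonoidHom.sum_apply_mul, mul_assoc,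
          sum_mul_sum_units (K := K) H, mul_smul_comm]
        module

lemma add_mul_twist_mul_self :
    (∑ x, H x + R * ∑ x : Fˣ, ψ x • H x) * (∑ x, H x + R * ∑ x : Fˣ, ψ x • H x) =
      ((Fintype.card F : K) * Fintype.card F) • 1 - ∑ x, H x - R * ∑ x, H x := by
  have hEΨ : (∑ x, H x) * (R * ∑ x : Fˣ, ψ x • H x) = -(R * ∑ x, H x) := by
    rw [← mul_assoc, MonoidHom.sum_mul_of_mul_eq_mul_inv H hconj, mul_assoc,
      MonoidHom.sum_mul_sum_smul, AddChar.sum_units_eq_neg_one hψ, neg_one_smul, mul_neg]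
  rw [mul_add, add_mul_twist_mul_sum H hψ, add_mul, hEΨ, mul_twist_mul_self H hψ hconj hquad]
  module

end JuyumayaRelation

section YokonumaHecke

variable {n : ℕ} {F : Type} [Field F] [DecidableEq F]

lemma hElem_mul (i : Fin n) (r s : Fˣ) :
    hElem (F := F) i r * hElem i s = hElem i (r * s) := by
  apply Subtype.ext
  funext j
  have hne : i.castSucc ≠ i.succ := Fin.castSucc_lt_succ.ne
  simp only [hElem, Subgroup.coe_mul, Pi.mul_apply, Pi.mulSingle_apply, mul_inv_rev]
  split_ifs <;> simp_all [mul_comm]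

lemma hElem_one (i : Fin n) : hElem (F := F) i 1 = 1 := by
  apply Subtype.ext
  simp [hElem]

lemma sAct_hElem (i : Fin n) (r : Fˣ) : sAct i (hElem (F := F) i r) = hElem i r⁻¹ := by
  apply Subtype.ext
  funext j
  have hne : i.castSucc ≠ i.succ := Fin.castSucc_lt_succ.ne
  simp only [sAct, hElem, Pi.mul_apply, Pi.mulSingle_apply, Equiv.swap_apply_def]
  split_ifs <;> simp_all

def hElemHom (i : Fin n) : Fˣ →* TGrp n F where
  toFun := hElem i
  map_one' := hElem_one i
  map_mul' r s := (hElem_mul i r s).symm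

variable [Fintype F]

lemma yokT_mul (t t' : TGrp n F) : yokT n F t * yokT n F t' = yokT n F (t * t') := by
  rw [yokT, yokT, ← map_mul]
  exact RingQuot.mkAlgHom_rel ℂ (YRel.t_mul t t')

lemma yokT_one : yokT n F 1 = 1 :=
  (RingQuot.mkAlgHom_rel ℂ YRel.t_one).trans (map_one _)

def yokTHom : TGrp n F →* Yok n F where
  toFun := yokT n F
  map_one' := yokT_one
  map_mul' t t' := (yokT_mul t t').symm

def yokH (i : Fin n) : Fˣ →* Yok n F :=
  yokTHom.comp (hElemHom i)

lemma yokH_mul_yokR (i : Fin n) (r : Fˣ) :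
    yokH i r * yokR n F i = yokR n F i * yokH i r⁻¹ := by
  change yokT n F (hElem i r) * yokR n F i = yokR n F i * yokT n F (hElem i r⁻¹)
  rw [yokT, yokR, yokT, ← map_mul, ← map_mul, ← sAct_hElem]
  exact RingQuot.mkAlgHom_rel ℂ (YRel.t_comm _ i)

lemma yokR_mul_self (i : Fin n) :
    yokR n F i * yokR n F i =
      (Fintype.card F : ℂ) • yokH i (-1) + yokR n F i * ∑ r, yokH i r := by
  rw [yokR, ← map_mul, RingQuot.mkAlgHom_rel ℂ (YRel.quad (F := F) i)]
  simp [yokH, yokTHom, hElemHom, yokT, Finset.mul_sum]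

end YokonumaHecke

theorem juyumaya_quadratic_relation_general (n : ℕ)
    (F : Type) [Field F] [Fintype F] [DecidableEq F]
    (ψ : F → ℂ) (hψadd : ∀ a b, ψ (a + b) = ψ a * ψ b)
    (hψne : ∀ a, ψ a ≠ 0) (hψnt : ∃ a, ψ a ≠ 1)
    (i : Fin n) :
    yokL n F ψ i ^ 2 =
      1 - (Fintype.card F : ℂ)⁻¹ • (yokE n F i - yokL n F ψ i * yokE n F i) := by
  have hψ0 : ψ 0 = 1 := mul_left_cancel₀ (hψne 0) (by rw [← hψadd, add_zero, mul_one])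
  let χ : AddChar F ℂ := { toFun := ψ, map_zero_eq_one' := hψ0, map_add_eq_mul' := hψadd }
  have hχ : χ.IsPrimitive := AddChar.IsPrimitive.of_ne_one (AddChar.ne_one_iff.2 hψnt)
  let H := yokH (F := F) i
  have hE : yokE n F i = ∑ r, H r := rfl
  have hL : yokL n F ψ i =
      (Fintype.card F : ℂ)⁻¹ • (∑ r, H r + yokR n F i * ∑ r : Fˣ, χ r • H r) := rfl
  rw [hL, hE, sq, smul_mul_smul_comm, smul_mul_assoc,
    add_mul_twist_mul_self H hχ (yokH_mul_yokR i) (yokR_mul_self i), add_mul_twist_mul_sum H hχ _]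
  match_scalars <;> field_simp
  ring

/-- In the Yokonuma–Hecke algebra, Juyumaya's generators satisfy the
quadratic relation `L_i² = 1 − Q⁻¹(E_i − L_i E_i)`. -/
theorem juyumaya_quadratic_relation (n : ℕ) (hn : 1 ≤ n)
    (F : Type) [Field F] [Fintype F] [DecidableEq F]
    (ψ : F → ℂ) (hψadd : ∀ a b, ψ (a + b) = ψ a * ψ b)
    (hψne : ∀ a, ψ a ≠ 0) (hψnt : ∃ a, ψ a ≠ 1)
    (i : Fin n) :
    yokL n F ψ i ^ 2 =
      1 - (Fintype.card F : ℂ)⁻¹ • (yokE n F i - yokL n F ψ i * yokE n F i) :=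
  juyumaya_quadratic_relation_general n F ψ hψadd hψne hψnt i
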